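/- Let ρ, σ be density operators on a finite-dimensional Hilbert space. The maximum of Tr(Λ_ρρ) over all PSD operators Λ_ρ ≤ I satisfying Tr(Λ_ρσ) = 0 equals 1 − Tr(Π_σρ), where Π_σ is the support projection of σ; the maximum is attained at Λ_ρ = Π_{ρ+σ} − Π_σ. -/

import Mathlib

open Matrix
open scoped ComplexOrder

/-- `P` is an orthogonal projection matrix. -/
def IsOrthProj {n : ℕ} (P : Matrix (Fin n) (Fin n) ℂ) : Prop :=
  P.IsHermitian ∧ P * P = P

/-- `P` is the orthogonal projection onto the range (support) of `ν`. -/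
def IsSupportProj {n : ℕ} (ν P : Matrix (Fin n) (Fin n) ℂ) : Prop :=
  IsOrthProj P ∧ LinearMap.range P.mulVecLin = LinearMap.range ν.mulVecLin

/-!
A feasible `Λ` has `Tr(Λσ) = 0`; for positive semidefinite matrices this forces `Λσ = 0`, hence
`ΛΠ_σ = 0`. Conjugating `Λ ≤ 1` by the projection `1 - Π_σ` then gives `Λ ≤ 1 - Π_σ`, so
`Tr(Λρ) ≤ Tr((1 - Π_σ)ρ) = 1 - Tr(Π_σρ)`, and `Λ = 1 - Π_σ` is itself feasible. For the value at
`Π_{ρ+σ} - Π_σ`, the same vanishing argument applied to `(1 - Π_{ρ+σ})(ρ + σ) = 0` shows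
`Π_{ρ+σ}ρ = ρ`.
-/

open scoped MatrixOrder

namespace Matrix

theorem mul_eq_zero_iff_range_le_ker {R l m o : Type*} [CommSemiring R] [Fintype m] [Fintype o]
    [DecidableEq o] (A : Matrix l m R) (B : Matrix m o R) :
    A * B = 0 ↔ LinearMap.range B.mulVecLin ≤ LinearMap.ker A.mulVecLin := by
  rw [LinearMap.range_le_ker_iff, ← mulVecLin_mul, ← toLin'_apply', LinearEquiv.map_eq_zero_iff]

variable {𝕜 m : Type*} [RCLike 𝕜] [Fintype m] [DecidableEq m] {A B C : Matrix m m 𝕜}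

theorem PosSemidef.trace_mul_nonneg (hA : A.PosSemidef) (hB : B.PosSemidef) :
    0 ≤ (A * B).trace := by
  obtain ⟨T, rfl⟩ := CStarAlgebra.nonneg_iff_eq_star_mul_self.mp hB.nonneg
  rw [← mul_assoc, trace_mul_comm]
  simpa [mul_assoc, star_eq_conjTranspose] using (hA.mul_mul_conjTranspose_same T).trace_nonneg

theorem PosSemidef.mul_eq_zero_of_trace_mul_eq_zero (hA : A.PosSemidef) (hB : B.PosSemidef)
    (h : (A * B).trace = 0) : A * B = 0 := by
  obtain ⟨S, rfl⟩ := CStarAlgebra.nonneg_iff_eq_star_mul_self.mp hA.nonneg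
  obtain ⟨T, rfl⟩ := CStarAlgebra.nonneg_iff_eq_star_mul_self.mp hB.nonneg
  have hTS : T * star S = 0 := by
    rw [← trace_conjTranspose_mul_self_eq_zero_iff, ← h, ← star_eq_conjTranspose]
    calc (star (T * star S) * (T * star S)).trace = (S * star T * T * star S).trace := by
          simp only [star_mul, star_star, mul_assoc]
      _ = (star S * (S * star T * T)).trace := trace_mul_comm _ _
      _ = (star S * S * (star T * T)).trace := by simp only [mul_assoc]
  have hST : S * star T = 0 := by simpa using congrArg star hTS
  rw [show star S * S * (star T * T) = star S * (S * star T) * T by noncomm_ring, hST,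
    mul_zero, zero_mul]

theorem PosSemidef.mul_eq_zero_of_mul_add_eq_zero (hA : A.PosSemidef) (hB : B.PosSemidef)
    (hC : C.PosSemidef) (h : A * (B + C) = 0) : A * B = 0 := by
  have htrace : (A * B).trace + (A * C).trace = 0 := by
    rw [← trace_add, ← mul_add, h, trace_zero]
  exact hA.mul_eq_zero_of_trace_mul_eq_zero hB
    ((add_eq_zero_iff_of_nonneg (hA.trace_mul_nonneg hB) (hA.trace_mul_nonneg hC)).mp htrace).1

theorem trace_mul_le_trace_mul (hAB : A ≤ B) (hC : C.PosSemidef) :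
    (A * C).trace ≤ (B * C).trace := by
  rw [← sub_nonneg, ← trace_sub, ← sub_mul]
  exact (le_iff.mp hAB).trace_mul_nonneg hC

end Matrix

theorem IsStarProjection.le_one_sub_of_mul_eq_zero {R : Type*} [Ring R] [PartialOrder R]
    [StarRing R] [StarOrderedRing R] {p a : R} (hp : IsStarProjection p) (ha : IsSelfAdjoint a)
    (hap : a * p = 0) (ha1 : a ≤ 1) : a ≤ 1 - p := by
  have hpa : p * a = 0 := by
    simpa [hp.isSelfAdjoint.star_eq, ha.star_eq] using congrArg star hap
  have hconj := star_right_conjugate_le_conjugate ha1 (1 - p)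
  rwa [hp.one_sub.isSelfAdjoint.star_eq, mul_one, hp.one_sub.isIdempotentElem.eq, sub_mul,
    one_mul, hpa, sub_zero, mul_sub, mul_one, hap, sub_zero] at hconj

section SupportProjection

variable {n : ℕ} {ν P A B : Matrix (Fin n) (Fin n) ℂ}

theorem IsOrthProj.isStarProjection (hP : IsOrthProj P) : IsStarProjection P :=
  ⟨hP.2, hP.1⟩

namespace IsSupportProj

theorem mul_eq_zero_iff (hP : IsSupportProj ν P) : A * P = 0 ↔ A * ν = 0 := by
  rw [mul_eq_zero_iff_range_le_ker, mul_eq_zero_iff_range_le_ker, hP.2]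

theorem mul_self (hP : IsSupportProj ν P) : P * ν = ν := by
  have h := hP.mul_eq_zero_iff.mp hP.1.isStarProjection.one_sub_mul_self
  rwa [sub_mul, one_mul, sub_eq_zero, eq_comm] at h

theorem mul_left_of_add (hP : IsSupportProj (A + B) P) (hA : A.PosSemidef)
    (hB : B.PosSemidef) : P * A = A := by
  have hQ : (1 - P).PosSemidef := nonneg_iff_posSemidef.mp hP.1.isStarProjection.one_sub.nonneg
  have hQA := hQ.mul_eq_zero_of_mul_add_eq_zero hA hB
    (by rw [sub_mul, one_mul, hP.mul_self, sub_self])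
  rwa [sub_mul, one_mul, sub_eq_zero, eq_comm] at hQA

end IsSupportProj

end SupportProjection

theorem stmt_18_general {n : ℕ} (ρ σ : Matrix (Fin n) (Fin n) ℂ)
    (hρ : ρ.PosSemidef) (hσ : σ.PosSemidef)
    (hρ1 : ρ.trace = 1)
    (Psig : Matrix (Fin n) (Fin n) ℂ) (hPsig : IsSupportProj σ Psig)
    (Prs : Matrix (Fin n) (Fin n) ℂ) (hPrs : IsSupportProj (ρ + σ) Prs) :
    IsGreatest
      {t : ℝ | ∃ Λ : Matrix (Fin n) (Fin n) ℂ,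
        Λ.PosSemidef ∧ (1 - Λ).PosSemidef ∧ (Λ * σ).trace = 0 ∧
        t = ((Λ * ρ).trace).re}
      (1 - ((Psig * ρ).trace).re) ∧
    (((Prs - Psig) * ρ).trace).re = 1 - ((Psig * ρ).trace).re := by
  have hPσ := hPsig.1.isStarProjection
  have hvalue : 1 - ((Psig * ρ).trace).re = (((1 - Psig) * ρ).trace).re := by
    simp [sub_mul, trace_sub, hρ1]
  refine ⟨⟨⟨1 - Psig, nonneg_iff_posSemidef.mp hPσ.one_sub.nonneg, ?_, ?_, hvalue⟩, ?_⟩, ?_⟩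
  · simpa using nonneg_iff_posSemidef.mp hPσ.nonneg
  · rw [sub_mul, one_mul, hPsig.mul_self, sub_self, trace_zero]
  · rintro t ⟨Λ, hΛ, hΛ1, hΛσ, rfl⟩
    have hΛP : Λ * Psig = 0 :=
      hPsig.mul_eq_zero_iff.mpr (hΛ.mul_eq_zero_of_trace_mul_eq_zero hσ hΛσ)
    have hΛle : Λ ≤ 1 - Psig :=
      hPσ.le_one_sub_of_mul_eq_zero hΛ.isHermitian hΛP (le_iff.mpr hΛ1)
    rw [hvalue]
    exact (Complex.le_def.mp (trace_mul_le_trace_mul hΛle hρ)).1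
  · rw [sub_mul, hPrs.mul_left_of_add hρ hσ, trace_sub, hρ1, Complex.sub_re, Complex.one_re]

/-- The maximum of `Tr(Λ_ρρ)` over PSD `Λ_ρ ≤ I` with `Tr(Λ_ρσ) = 0` equals
`1 − Tr(Π_σρ)`, attained at `Λ_ρ = Π_{ρ+σ} − Π_σ`. -/
theorem stmt_18 {n : ℕ} (ρ σ : Matrix (Fin n) (Fin n) ℂ)
    (hρ : ρ.PosSemidef) (hσ : σ.PosSemidef)
    (hρ1 : ρ.trace = 1) (hσ1 : σ.trace = 1)
    (Psig : Matrix (Fin n) (Fin n) ℂ) (hPsig : IsSupportProj σ Psig)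
    (Prs : Matrix (Fin n) (Fin n) ℂ) (hPrs : IsSupportProj (ρ + σ) Prs) :
    IsGreatest
      {t : ℝ | ∃ Λ : Matrix (Fin n) (Fin n) ℂ,
        Λ.PosSemidef ∧ (1 - Λ).PosSemidef ∧ (Λ * σ).trace = 0 ∧
        t = ((Λ * ρ).trace).re}
      (1 - ((Psig * ρ).trace).re) ∧
    (((Prs - Psig) * ρ).trace).re = 1 - ((Psig * ρ).trace).re :=
  stmt_18_general ρ σ hρ hσ hρ1 Psig hPsig Prs hPrs
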